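/- arXiv:2111.09217 — 2 statements merged into one kernel-verified Lean document; each statement's English description precedes it below -/
import Mathlib

section
/- In a line network with N nodes under a stationary randomized policy where link e_j is successfully activated i.i.d. each slot with probability α_j = γ_{e_j} f_{e_j} > 0, the expected age at the destination node N satisfies lim_{t→∞} E[A_N(t)] = Σ_{j=2}^{N} 1/(γ_{e_j} f_{e_j}). -/
open MeasureTheory ProbabilityTheory Filter

/-!
The age at node `j` at time `t` is a function of the link outcomes before time `t`, hence
independent of the outcomes at time `t`. Conditioning on the success of link `e_j` therefore gives
the recursion `E A_j(t+1) = (1 - α_j) E A_j(t) + α_j (E A_{j-1}(t) + 1/α_j)` for the mean ages.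
A relaxation `x(t+1) = (1 - α) x(t) + α w(t)` with `0 < α ≤ 1` tracks the limit of its input `w`,
so by induction along the line `E A_j(t) → ∑_{k=2}^{j} 1/α_k`.
-/

lemma tendsto_of_relaxation {α L : ℝ} {x w : ℕ → ℝ} (hα₀ : 0 < α) (hα₁ : α ≤ 1)
    (hw : Tendsto w atTop (nhds L)) (hx : ∀ t, x (t + 1) = (1 - α) * x t + α * w t) :
    Tendsto x atTop (nhds L) := by
  rw [Metric.tendsto_atTop]
  intro ε hε
  obtain ⟨T, hT⟩ := Metric.tendsto_atTop.1 hw (ε / 2) (half_pos hε)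
  -- Once `w` is `ε/2`-close to `L`, the excess of `|x - L|` over `ε/2` contracts by `1 - α`.
  have hdecay : ∀ n, |x (T + n) - L| - ε / 2 ≤ (1 - α) ^ n * (|x T - L| - ε / 2) := by
    intro n
    induction n with
    | zero => simp
    | succ n ih =>
      have hwn : |w (T + n) - L| < ε / 2 := hT (T + n) (Nat.le_add_right T n)
      have hstep : x (T + (n + 1)) - L = (1 - α) * (x (T + n) - L) + α * (w (T + n) - L) := by
        rw [← add_assoc, hx]; ring
      calc |x (T + (n + 1)) - L| - ε / 2
          ≤ (1 - α) * |x (T + n) - L| + α * |w (T + n) - L| - ε / 2 := by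
            rw [hstep]
            gcongr
            refine (abs_add_le _ _).trans_eq ?_
            rw [abs_mul, abs_mul, abs_of_nonneg (by linarith : (0 : ℝ) ≤ 1 - α),
              abs_of_pos hα₀]
        _ ≤ (1 - α) * (|x (T + n) - L| - ε / 2) := by nlinarith
        _ ≤ (1 - α) ^ (n + 1) * (|x T - L| - ε / 2) := by
            rw [pow_succ', mul_assoc]
            exact mul_le_mul_of_nonneg_left ih (by linarith)
  have hgeom : Tendsto (fun n => (1 - α) ^ n * (|x T - L| - ε / 2)) atTop (nhds 0) := by
    simpa using (tendsto_pow_atTop_nhds_zero_of_lt_one (by linarith) (by linarith)).mul_const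
      (|x T - L| - ε / 2)
  obtain ⟨n₀, hn₀⟩ := Metric.tendsto_atTop.1 hgeom (ε / 2) (half_pos hε)
  refine ⟨T + n₀, fun t ht => ?_⟩
  obtain ⟨n, rfl⟩ := Nat.exists_eq_add_of_le (le_trans (Nat.le_add_right T n₀) ht)
  have hsmall : (1 - α) ^ n * (|x T - L| - ε / 2) < ε / 2 := by
    have h := hn₀ n (by omega)
    rw [Real.dist_eq, sub_zero] at h
    exact (abs_lt.1 h).2
  rw [Real.dist_eq]
  linarith [hdecay n]

section

variable {Ω : Type*}

lemma integral_ite_of_indepFun [MeasurableSpace Ω] {μ : Measure Ω} [IsProbabilityMeasure μ]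
    {B : Ω → Bool} {X Y : Ω → ℝ}
    (hB : Measurable B) (hX : Integrable X μ) (hY : Integrable Y μ)
    (hXB : IndepFun X B μ) (hYB : IndepFun Y B μ) :
    ∫ ω, (if B ω then X ω else Y ω) ∂μ =
      μ.real {ω | B ω} * ∫ ω, X ω ∂μ + (1 - μ.real {ω | B ω}) * ∫ ω, Y ω ∂μ := by
  have hs : MeasurableSet[.comap B inferInstance] {ω | B ω} := ⟨{true}, trivial, rfl⟩
  have hle : MeasurableSpace.comap B inferInstance ≤ ‹MeasurableSpace Ω› := hB.comap_le
  have hpiece : (fun ω => if B ω then X ω else Y ω) = {ω | B ω}.piecewise X Y := by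
    ext ω; simp [Set.piecewise]
  rw [hpiece, integral_piecewise (hle _ hs) hX.integrableOn hY.integrableOn,
    ← probReal_compl_eq_one_sub (hle _ hs)]
  exact congr_arg₂ (· + ·)
    (((IndepFun_iff_Indep _ _ _).1 hXB).symm.setIntegral_eq_mul (f := id) hle hX.aemeasurable
      hs aestronglyMeasurable_id)
    (((IndepFun_iff_Indep _ _ _).1 hYB).symm.setIntegral_eq_mul (f := id) hle hY.aemeasurable
      hs.compl aestronglyMeasurable_id)

section Past

variable {ι β : Type*} [mβ : MeasurableSpace β] (X : ι → ℕ → Ω → β)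

abbrev pastSigma (t : ℕ) : MeasurableSpace Ω :=
  ⨆ p ∈ {p : ι × ℕ | p.2 < t}, mβ.comap (X p.1 p.2)

variable {X}

lemma pastSigma_mono : Monotone (pastSigma X) :=
  fun _ _ h => biSup_mono fun _ hp => hp.trans_le h

lemma pastSigma_le [MeasurableSpace Ω] (hX : ∀ i s, Measurable (X i s)) (t : ℕ) :
    pastSigma X t ≤ ‹MeasurableSpace Ω› :=
  iSup₂_le fun p _ => (hX p.1 p.2).comap_le

lemma measurable_pastSigma {i : ι} {s t : ℕ} (hst : s < t) : Measurable[pastSigma X t] (X i s) :=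
  measurable_iff_comap_le.2 <| le_iSup₂ (f := fun p (_ : p ∈ {p : ι × ℕ | p.2 < t}) =>
    mβ.comap (X p.1 p.2)) (i, s) hst

lemma indep_pastSigma [MeasurableSpace Ω] {μ : Measure Ω} (hX : ∀ i s, Measurable (X i s))
    (hind : iIndepFun (fun p : ι × ℕ => X p.1 p.2) μ) (i : ι) (t : ℕ) :
    Indep (pastSigma X t) (mβ.comap (X i t)) μ := by
  have hdisj : Disjoint {p : ι × ℕ | p.2 < t} {(i, t)} :=
    Set.disjoint_singleton_right.2 (lt_irrefl t)
  simpa only [pastSigma, Set.mem_singleton_iff, iSup_iSup_eq_left] using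
    indep_iSup_of_disjoint (fun p : ι × ℕ => (hX p.1 p.2).comap_le) hind hdisj

end Past

structure IsLineNetworkAge (N : ℕ) (S : ℕ → ℕ → Ω → Bool) (A : ℕ → ℕ → Ω → ℝ) : Prop where
  source : ∀ t ω, A 1 t ω = 0
  init : ∀ j ω, A j 0 ω = 0
  succ : ∀ j ∈ Finset.Icc 2 N, ∀ t ω,
    A j (t + 1) ω = if S j t ω then A (j - 1) t ω + 1 else A j t ω + 1

namespace IsLineNetworkAge

variable {N : ℕ} {S : ℕ → ℕ → Ω → Bool} {A : ℕ → ℕ → Ω → ℝ}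

lemma measurable_pastSigma (hA : IsLineNetworkAge N S A) (t : ℕ) :
    ∀ j ∈ Finset.Icc 1 N, Measurable[pastSigma S t] (A j t) := by
  induction t with
  | zero => intro j _; rw [funext (hA.init j)]; exact measurable_const
  | succ t ih =>
    intro j hj
    obtain ⟨hj₁, hjN⟩ := Finset.mem_Icc.1 hj
    rcases hj₁.eq_or_lt with rfl | hj₂
    · rw [funext (hA.source (t + 1))]; exact measurable_const
    have hmono := pastSigma_mono (X := S) t.le_succ
    have hprev := (ih (j - 1) (Finset.mem_Icc.2 ⟨by omega, by omega⟩)).mono hmono le_rfl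
    have hcur := (ih j hj).mono hmono le_rfl
    simp only [funext (hA.succ j (Finset.mem_Icc.2 ⟨hj₂, hjN⟩) t)]
    exact Measurable.ite (_root_.measurable_pastSigma t.lt_succ_self (measurableSet_singleton true))
      (hprev.add_const 1) (hcur.add_const 1)

lemma mem_Icc (hA : IsLineNetworkAge N S A) (t : ℕ) :
    ∀ j ∈ Finset.Icc 1 N, ∀ ω, A j t ω ∈ Set.Icc 0 (t : ℝ) := by
  induction t with
  | zero => intro j _ ω; simp [hA.init]
  | succ t ih =>
    intro j hj ω
    obtain ⟨hj₁, hjN⟩ := Finset.mem_Icc.1 hj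
    rcases hj₁.eq_or_lt with rfl | hj₂
    · simp only [hA.source]; exact ⟨le_rfl, by positivity⟩
    have hprev := ih (j - 1) (Finset.mem_Icc.2 ⟨by omega, by omega⟩) ω
    have hcur := ih j hj ω
    rw [hA.succ j (Finset.mem_Icc.2 ⟨hj₂, hjN⟩) t ω]
    push_cast
    split_ifs
    · exact ⟨by linarith [hprev.1], by linarith [hprev.2]⟩
    · exact ⟨by linarith [hcur.1], by linarith [hcur.2]⟩

variable [MeasurableSpace Ω] {μ : Measure Ω}

lemma integrable (hA : IsLineNetworkAge N S A) (hS : ∀ j t, Measurable (S j t))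
    [IsFiniteMeasure μ] (t : ℕ) {j : ℕ} (hj : j ∈ Finset.Icc 1 N) : Integrable (A j t) μ :=
  .of_bound ((hA.measurable_pastSigma t j hj).mono (pastSigma_le hS t) le_rfl).aestronglyMeasurable
    t (ae_of_all μ fun ω => by
      obtain ⟨h₀, h₁⟩ := hA.mem_Icc t j hj ω
      rwa [Real.norm_eq_abs, abs_of_nonneg h₀])

lemma indepFun (hA : IsLineNetworkAge N S A) (hS : ∀ j t, Measurable (S j t))
    (hind : iIndepFun (fun p : ℕ × ℕ => S p.1 p.2) μ) (t k : ℕ) {j : ℕ}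
    (hj : j ∈ Finset.Icc 1 N) : IndepFun (A j t) (S k t) μ :=
  (IndepFun_iff_Indep _ _ _).2 <| indep_of_indep_of_le_left (indep_pastSigma hS hind k t)
    (measurable_iff_comap_le.1 (hA.measurable_pastSigma t j hj))

lemma integral_succ (hA : IsLineNetworkAge N S A) (hS : ∀ j t, Measurable (S j t))
    (hind : iIndepFun (fun p : ℕ × ℕ => S p.1 p.2) μ) [IsProbabilityMeasure μ] (t : ℕ)
    {j : ℕ} (hj : j ∈ Finset.Icc 2 N) :
    ∫ ω, A j (t + 1) ω ∂μ = μ.real {ω | S j t ω} * (∫ ω, A (j - 1) t ω ∂μ + 1)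
      + (1 - μ.real {ω | S j t ω}) * (∫ ω, A j t ω ∂μ + 1) := by
  obtain ⟨hj₂, hjN⟩ := Finset.mem_Icc.1 hj
  have hprev : j - 1 ∈ Finset.Icc 1 N := Finset.mem_Icc.2 ⟨by omega, by omega⟩
  have hcur : j ∈ Finset.Icc 1 N := Finset.mem_Icc.2 ⟨by omega, hjN⟩
  have hplus {k : ℕ} (hk : k ∈ Finset.Icc 1 N) : IndepFun (fun ω => A k t ω + 1) (S j t) μ :=
    (hA.indepFun hS hind t j hk).comp (measurable_add_const 1) measurable_id
  simp only [hA.succ j hj t]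
  rw [integral_ite_of_indepFun (X := fun ω => A (j - 1) t ω + 1) (Y := fun ω => A j t ω + 1)
    (hS j t) ((hA.integrable hS t hprev).add (integrable_const 1))
    ((hA.integrable hS t hcur).add (integrable_const 1)) (hplus hprev) (hplus hcur),
    integral_add (hA.integrable hS t hprev) (integrable_const 1),
    integral_add (hA.integrable hS t hcur) (integrable_const 1)]
  simp

lemma tendsto_integral (hA : IsLineNetworkAge N S A) (hS : ∀ j t, Measurable (S j t))
    (hind : iIndepFun (fun p : ℕ × ℕ => S p.1 p.2) μ) [IsProbabilityMeasure μ] {α : ℕ → ℝ}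
    (hα : ∀ j ∈ Finset.Icc 2 N, 0 < α j)
    (hSα : ∀ j ∈ Finset.Icc 2 N, ∀ t, μ.real {ω | S j t ω} = α j) :
    ∀ j ∈ Finset.Icc 1 N,
      Tendsto (fun t => ∫ ω, A j t ω ∂μ) atTop (nhds (∑ k ∈ Finset.Icc 2 j, 1 / α k)) := by
  intro j hj
  induction j with
  | zero => simp at hj
  | succ j ih =>
    obtain ⟨hj₁, hjN⟩ := Finset.mem_Icc.1 hj
    rcases hj₁.eq_or_lt with hj₁ | hj₂
    · obtain rfl : j = 0 := by omega
      simp [hA.source]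
    have hjmem : j + 1 ∈ Finset.Icc 2 N := Finset.mem_Icc.2 ⟨hj₂, hjN⟩
    have hα₀ := hα (j + 1) hjmem
    have hα₁ : α (j + 1) ≤ 1 := hSα (j + 1) hjmem 0 ▸ measureReal_le_one
    rw [Finset.sum_Icc_succ_top hj₂]
    refine tendsto_of_relaxation hα₀ hα₁
      (((ih (Finset.mem_Icc.2 ⟨by omega, by omega⟩)).add_const (1 / α (j + 1)))) fun t => ?_
    rw [hA.integral_succ hS hind t hjmem, hSα (j + 1) hjmem t, Nat.add_sub_cancel]
    field_simp
    ring

end IsLineNetworkAge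

end

/-- In a line network with N nodes under a stationary randomized policy
where link e_j = (j-1,j) is successfully activated i.i.d. each slot with probability
γ_j f_j > 0, the expected age at the destination node N satisfies
lim_{t→∞} E[A_N(t)] = Σ_{j=2}^{N} 1/(γ_j f_j). -/
theorem line_network_expected_age_limit {Ω : Type*} [MeasurableSpace Ω]
    (μ : Measure Ω) [IsProbabilityMeasure μ]
    (N : ℕ) (hN : 2 ≤ N) (γ f : ℕ → ℝ)
    (S : ℕ → ℕ → Ω → Bool)  -- S j t ω : success on link e_j at time t
    (A : ℕ → ℕ → Ω → ℝ)     -- A j t ω : age at node j at time t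
    (hαpos : ∀ j ∈ Finset.Icc 2 N, 0 < γ j * f j ∧ γ j * f j ≤ 1)
    (hSm : ∀ j t, Measurable (S j t))
    (hSprob : ∀ j ∈ Finset.Icc 2 N, ∀ t,
      μ {ω | S j t ω = true} = ENNReal.ofReal (γ j * f j))
    (hSindep : iIndepFun (m := fun _ : ℕ × ℕ => (inferInstance : MeasurableSpace Bool))
      (fun p ω => S p.1 p.2 ω) μ)
    (hsource : ∀ t ω, A 1 t ω = 0)
    (hinit : ∀ j ω, A j 0 ω = 0)
    (hevol : ∀ j ∈ Finset.Icc 2 N, ∀ t ω,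
      A j (t + 1) ω = if S j t ω then A (j - 1) t ω + 1 else A j t ω + 1) :
    Tendsto (fun t : ℕ => ∫ ω, A N t ω ∂μ) atTop
      (nhds (∑ j ∈ Finset.Icc 2 N, 1 / (γ j * f j))) := by
  have hA : IsLineNetworkAge N S A := ⟨hsource, hinit, hevol⟩
  refine hA.tendsto_integral hSm hSindep (fun j hj => (hαpos j hj).1) (fun j hj t => ?_) N
    (Finset.mem_Icc.2 ⟨by omega, le_rfl⟩)
  rw [measureReal_def, hSprob j hj t, ENNReal.toReal_ofReal (hαpos j hj).1.le]
end

section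
/- Suppose for each source-destination pair (k,j) the effective age process B_j^k(t) is bounded: 0 ≤ B_j^k(t) ≤ D for all t, and the debt queue evolves as Q_j^k(t+1) = [Q_j^k(t) + B_j^k(t+1) - α_j^k]^+ with Q_j^k(0) = 0. Then lim_{T→∞} E[Q_j^k(T)/T] = 0 holds if and only if lim sup_{T→∞} (1/T) Σ_{t=1}^T B_j^k(t) ≤ α_j^k almost surely (given suitable convergence of the time averages). In particular, a target vector α is age-achievable if and only if some feasible policy stabilizes all debt queues. -/
/-!
By Lindley's formula the debt queue is the reflection of the walk `f T = ∑_{1 ≤ t ≤ T} B t - T α`: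
`Q T = max_{s ≤ T} (f T - f s)`. Hence, along every path on which the time averages of `B`
converge to `L`, `Q T / T → max (L - α) 0`. Since `0 ≤ Q T / T ≤ max (D - α) 0`, bounded
convergence gives `E[Q T] / T → E[max (L - α) 0]`, which vanishes iff `L ≤ α` almost surely.
-/

open MeasureTheory Filter Topology Finset

lemma exists_abs_sub_mul_le_of_tendsto_div {f : ℕ → ℝ} {c : ℝ}
    (hf : Tendsto (fun T : ℕ => f T / T) atTop (𝓝 c)) {ε : ℝ} (hε : 0 < ε) :
    ∃ C, ∀ T : ℕ, |f T - c * T| ≤ ε * T + C := by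
  obtain ⟨N, hN⟩ := eventually_atTop.1
    ((hf.sub_const c).abs.eventually (gt_mem_nhds (by simpa using hε)) |>.and
      (eventually_gt_atTop 0))
  refine ⟨∑ s ∈ range N, |f s - c * s|, fun T => ?_⟩
  have hC : 0 ≤ ∑ s ∈ range N, |f s - c * s| := sum_nonneg fun _ _ => abs_nonneg _
  have hεT : 0 ≤ ε * T := by positivity
  rcases lt_or_ge T N with hTN | hTN
  · have := single_le_sum (f := fun s : ℕ => |f s - c * s|) (fun _ _ => abs_nonneg _)
      (mem_range.2 hTN)
    linarith
  · obtain ⟨hlt, hT⟩ := hN T hTN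
    have hTpos : (0 : ℝ) < T := by exact_mod_cast hT
    have : |f T - c * T| = |f T / T - c| * T := by
      rw [← abs_of_pos hTpos, ← abs_mul, abs_of_pos hTpos, sub_mul, div_mul_cancel₀ _ hTpos.ne']
    nlinarith

section Reflection

variable {f q : ℕ → ℝ} {c : ℝ}

lemma exists_le_mul_add_of_le_sub (hf : Tendsto (fun T : ℕ => f T / T) atTop (𝓝 c))
    (hup : ∀ T, ∃ s ≤ T, q T ≤ f T - f s) {ε : ℝ} (hε : 0 < ε) :
    ∃ C, ∀ T : ℕ, q T ≤ (max c 0 + ε) * T + C := by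
  obtain ⟨C, hC⟩ := exists_abs_sub_mul_le_of_tendsto_div hf (half_pos hε)
  refine ⟨2 * C, fun T => ?_⟩
  obtain ⟨s, hsT, hqs⟩ := hup T
  have hsT' : (s : ℝ) ≤ T := by exact_mod_cast hsT
  have hfT := (abs_le.1 (hC T)).2
  have hfs := (abs_le.1 (hC s)).1
  have hdrift : c * (T - s) ≤ max c 0 * T := by
    nlinarith [le_max_left c 0, le_max_right c 0]
  nlinarith

/-- The hypotheses bracket `q` as the reflection `q T = max_{s ≤ T} (f T - f s)` of `f`
(for `f 0 = 0`). -/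
lemma tendsto_div_of_reflection_bounds (hf : Tendsto (fun T : ℕ => f T / T) atTop (𝓝 c))
    (hlow : ∀ T, f T ≤ q T) (hnn : ∀ T, 0 ≤ q T) (hup : ∀ T, ∃ s ≤ T, q T ≤ f T - f s) :
    Tendsto (fun T : ℕ => q T / T) atTop (𝓝 (max c 0)) := by
  refine tendsto_order.2 ⟨fun a ha => ?_, fun a ha => ?_⟩
  · filter_upwards [(hf.max tendsto_const_nhds).eventually (lt_mem_nhds ha)] with T hT
    exact hT.trans_le <| max_le (div_le_div_of_nonneg_right (hlow T) T.cast_nonneg)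
      (div_nonneg (hnn T) T.cast_nonneg)
  · obtain ⟨ε, hε, hεa⟩ : ∃ ε, 0 < ε ∧ max c 0 + 2 * ε = a :=
      ⟨(a - max c 0) / 2, by linarith, by ring⟩
    obtain ⟨C, hC⟩ := exists_le_mul_add_of_le_sub hf hup hε
    filter_upwards [(tendsto_const_div_atTop_nhds_zero_nat C).eventually (gt_mem_nhds hε),
      eventually_gt_atTop 0] with T hCT hT
    have hTpos : (0 : ℝ) < T := by exact_mod_cast hT
    calc q T / T ≤ ((max c 0 + ε) * T + C) / T := div_le_div_of_nonneg_right (hC T) hTpos.le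
      _ = max c 0 + ε + C / T := by field_simp
      _ < a := by linarith

end Reflection

section Lindley

variable {b q : ℕ → ℝ} {α : ℝ}

lemma lindley_nonneg (hq0 : q 0 = 0) (hq : ∀ t, q (t + 1) = max (q t + b (t + 1) - α) 0)
    (T : ℕ) : 0 ≤ q T := by
  cases T with
  | zero => exact hq0.ge
  | succ T => exact (hq T).symm ▸ le_max_right _ _

lemma lindley_le_mul {D : ℝ} (hbD : ∀ t, b t ≤ D) (hq0 : q 0 = 0)
    (hq : ∀ t, q (t + 1) = max (q t + b (t + 1) - α) 0) (T : ℕ) :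
    q T ≤ T * max (D - α) 0 := by
  induction T with
  | zero => simp [hq0]
  | succ T ih =>
    rw [hq T]
    push_cast
    exact max_le (by linarith [hbD (T + 1), le_max_left (D - α) 0])
      (by positivity)

lemma abs_lindley_div_le {D : ℝ} (hbD : ∀ t, b t ≤ D) (hq0 : q 0 = 0)
    (hq : ∀ t, q (t + 1) = max (q t + b (t + 1) - α) 0) (T : ℕ) :
    |q T / T| ≤ max (D - α) 0 := by
  rw [abs_of_nonneg (div_nonneg (lindley_nonneg hq0 hq T) T.cast_nonneg)]
  rcases T.eq_zero_or_pos with rfl | hT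
  · simp
  · rw [div_le_iff₀ (by exact_mod_cast hT), mul_comm]
    exact lindley_le_mul hbD hq0 hq T

lemma sum_sub_mul_le_lindley (hq0 : q 0 = 0) (hq : ∀ t, q (t + 1) = max (q t + b (t + 1) - α) 0)
    (T : ℕ) : ∑ t ∈ Icc 1 T, b t - T * α ≤ q T := by
  induction T with
  | zero => simp [hq0]
  | succ T ih =>
    rw [hq T, sum_Icc_succ_top (by omega)]
    push_cast
    exact le_max_of_le_left (by linarith)

/-- Lindley's formula: `s` is the last time `≤ T` at which the queue was empty. -/
lemma exists_lindley_le_sum_sub (hq0 : q 0 = 0)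
    (hq : ∀ t, q (t + 1) = max (q t + b (t + 1) - α) 0) (T : ℕ) :
    ∃ s ≤ T, q T ≤ (∑ t ∈ Icc 1 T, b t - T * α) - (∑ t ∈ Icc 1 s, b t - s * α) := by
  induction T with
  | zero => exact ⟨0, le_rfl, by simp [hq0]⟩
  | succ T ih =>
    obtain ⟨s, hsT, hqs⟩ := ih
    rcases le_or_gt (q T + b (T + 1) - α) 0 with hempty | hbusy
    · exact ⟨T + 1, le_rfl, by rw [hq T, max_eq_right hempty]; simp⟩
    · refine ⟨s, hsT.trans T.le_succ, ?_⟩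
      rw [hq T, max_eq_left hbusy.le, sum_Icc_succ_top (by omega)]
      push_cast
      linarith

lemma tendsto_lindley_div {L : ℝ} (hq0 : q 0 = 0)
    (hq : ∀ t, q (t + 1) = max (q t + b (t + 1) - α) 0)
    (hL : Tendsto (fun T : ℕ => (∑ t ∈ Icc 1 T, b t) / T) atTop (𝓝 L)) :
    Tendsto (fun T : ℕ => q T / T) atTop (𝓝 (max (L - α) 0)) := by
  refine tendsto_div_of_reflection_bounds ?_ (sum_sub_mul_le_lindley hq0 hq)
    (lindley_nonneg hq0 hq) (exists_lindley_le_sum_sub hq0 hq)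
  refine (hL.sub_const α).congr' ?_
  filter_upwards [eventually_gt_atTop 0] with T hT
  have hT' : (T : ℝ) ≠ 0 := by exact_mod_cast hT.ne'
  field_simp

end Lindley

lemma measurable_lindley {Ω : Type*} [MeasurableSpace Ω] {B Q : ℕ → Ω → ℝ} {α : ℝ}
    (hBm : ∀ t, Measurable (B t)) (hQ0 : ∀ ω, Q 0 ω = 0)
    (hQ : ∀ t ω, Q (t + 1) ω = max (Q t ω + B (t + 1) ω - α) 0) (T : ℕ) :
    Measurable (Q T) := by
  induction T with
  | zero => exact (funext hQ0 : Q 0 = fun _ => 0) ▸ measurable_const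
  | succ T ih =>
    rw [funext (hQ T)]
    exact ((ih.add (hBm (T + 1))).sub_const α).max measurable_const

lemma tendsto_integral_nhds_zero_iff_ae_eq_zero {Ω : Type*} [MeasurableSpace Ω] {μ : Measure Ω}
    [IsFiniteMeasure μ] {F : ℕ → Ω → ℝ} {g : Ω → ℝ} {C : ℝ}
    (hFm : ∀ n, AEStronglyMeasurable (F n) μ) (hFC : ∀ n, ∀ᵐ ω ∂μ, ‖F n ω‖ ≤ C)
    (hlim : ∀ᵐ ω ∂μ, Tendsto (fun n => F n ω) atTop (𝓝 (g ω))) (hg : 0 ≤ᵐ[μ] g) :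
    Tendsto (fun n => ∫ ω, F n ω ∂μ) atTop (𝓝 0) ↔ g =ᵐ[μ] 0 := by
  have hgC : ∀ᵐ ω ∂μ, ‖g ω‖ ≤ C := by
    filter_upwards [hlim, ae_all_iff.2 hFC] with ω hω hωC
    exact le_of_tendsto' hω.norm hωC
  have hgi : Integrable g μ :=
    (integrable_const C).mono' (aestronglyMeasurable_of_tendsto_ae atTop hFm hlim) hgC
  have hF := tendsto_integral_of_dominated_convergence (fun _ => C) hFm (integrable_const C)
    hFC hlim
  rw [← integral_eq_zero_iff_of_nonneg_ae hg hgi]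
  exact ⟨tendsto_nhds_unique hF, fun h => h ▸ hF⟩

theorem debt_stability_iff_age_achievable_general {Ω : Type*} [MeasurableSpace Ω]
    (μ : Measure Ω) [IsProbabilityMeasure μ]
    (D α : ℝ)
    (B Q : ℕ → Ω → ℝ)
    (hB : ∀ t ω, 0 ≤ B t ω ∧ B t ω ≤ D)
    (hBm : ∀ t, Measurable (B t))
    (hQ0 : ∀ ω, Q 0 ω = 0)
    (hQ : ∀ t ω, Q (t + 1) ω = max (Q t ω + B (t + 1) ω - α) 0)
    (hconv : ∀ᵐ ω ∂μ, ∃ L : ℝ,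
      Tendsto (fun T : ℕ => (∑ t ∈ Finset.Icc 1 T, B t ω) / (T : ℝ)) atTop (nhds L)) :
    Tendsto (fun T : ℕ => (∫ ω, Q T ω ∂μ) / (T : ℝ)) atTop (nhds 0) ↔
      (∀ᵐ ω ∂μ,
        Filter.limsup (fun T : ℕ => (∑ t ∈ Finset.Icc 1 T, B t ω) / (T : ℝ)) atTop ≤ α) := by
  have hlim : ∀ᵐ ω ∂μ, Tendsto (fun T : ℕ => Q T ω / T) atTop
      (𝓝 (max (limsup (fun T : ℕ => (∑ t ∈ Icc 1 T, B t ω) / T) atTop - α) 0)) := by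
    filter_upwards [hconv] with ω ⟨L, hL⟩
    rw [hL.limsup_eq]
    exact tendsto_lindley_div (hQ0 ω) (hQ · ω) hL
  simp_rw [← integral_div]
  rw [tendsto_integral_nhds_zero_iff_ae_eq_zero
    (fun T => ((measurable_lindley hBm hQ0 hQ T).div_const _).aestronglyMeasurable)
    (fun T => ae_of_all _ fun ω => (Real.norm_eq_abs _).trans_le <|
      abs_lindley_div_le (q := (Q · ω)) (fun t => (hB t ω).2) (hQ0 ω) (hQ · ω) T)
    hlim (ae_of_all _ fun _ => le_max_right _ _)]
  simp only [EventuallyEq, Pi.zero_apply, max_eq_right_iff, sub_nonpos]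

/-- For a bounded effective age process B(t) ∈ [0,D] and the debt queue
Q(t+1) = [Q(t) + B(t+1) - α]^+, Q(0) = 0, stability lim E[Q(T)]/T = 0 holds if and only
if limsup (1/T) Σ_{t=1}^T B(t) ≤ α almost surely, given a.s. convergence of the time
averages. Hence a target is age-achievable iff the debt queues can be stabilized. -/
theorem debt_stability_iff_age_achievable {Ω : Type*} [MeasurableSpace Ω]
    (μ : Measure Ω) [IsProbabilityMeasure μ]
    (D α : ℝ) (hD : 0 ≤ D)
    (B Q : ℕ → Ω → ℝ)
    (hB : ∀ t ω, 0 ≤ B t ω ∧ B t ω ≤ D)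
    (hBm : ∀ t, Measurable (B t))
    (hQ0 : ∀ ω, Q 0 ω = 0)
    (hQ : ∀ t ω, Q (t + 1) ω = max (Q t ω + B (t + 1) ω - α) 0)
    (hconv : ∀ᵐ ω ∂μ, ∃ L : ℝ,
      Tendsto (fun T : ℕ => (∑ t ∈ Finset.Icc 1 T, B t ω) / (T : ℝ)) atTop (nhds L)) :
    Tendsto (fun T : ℕ => (∫ ω, Q T ω ∂μ) / (T : ℝ)) atTop (nhds 0) ↔
      (∀ᵐ ω ∂μ,
        Filter.limsup (fun T : ℕ => (∑ t ∈ Finset.Icc 1 T, B t ω) / (T : ℝ)) atTop ≤ α) :=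
  debt_stability_iff_age_achievable_general μ D α B Q hB hBm hQ0 hQ hconv
end
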